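/- arXiv:2309.15997 — 2 statements merged into one kernel-verified Lean document; each statement's English description precedes it below -/
import Mathlib

section
/- The comparative advantage of priorities over quotas satisfies Δ := V_P − V_Q = (κ/2)·(1 − κγβ)·Var[ω], where V_P is the supremum over α ≥ 0 of ∫ U(min{κ(1+α−ω), min{κ,q}}, ω) dΛ(ω) and V_Q is the supremum over Q ∈ [0, min{κ,q}] of ∫ U(min{max{Q, κ(1−ω)}, min{κ,q}}, ω) dΛ(ω). -/
/-!
Completing the square, `U x ω = U (peak ω) ω - (c/2) (x - peak ω)^2` with `c = 1/κ + γβ` and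
`peak ω = (1 + γ - ω)/c`. The regularity conditions make the cap and the floor `κ(1-ω)` slack at
the optimal policies, and clipping only pushes the admission further from the peak, so both
problems reduce to their unclipped versions. There the gap to the peak is affine in `ω - E ω`,
with slope `1/c - κ` under a priority and `1/c` under a quota, and its expected square is
`intercept^2 + slope^2 Var ω`. Both optima have intercept `0`, whence
`Δ = (c/2) ((1/c)^2 - (1/c - κ)^2) Var ω = (κ/2)(1 - κγβ) Var ω`.
-/

open Set MeasureTheory

/-- Authority payoff. -/
noncomputable def U (q κ γ β x ω : ℝ) : ℝ :=
  q * ω + (1 + γ - ω) * x - (1/2) * (1/κ + γ*β) * x^2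

/-- Mean of ω under Λ. -/
noncomputable def Emean (Λ : Measure ℝ) : ℝ := ∫ ω, ω ∂Λ

/-- Variance of ω under Λ. -/
noncomputable def Vvar (Λ : Measure ℝ) : ℝ := ∫ ω, (ω - Emean Λ)^2 ∂Λ

/-- Value of the priority policy α. -/
noncomputable def UP (q κ γ β : ℝ) (Λ : Measure ℝ) (α : ℝ) : ℝ :=
  ∫ ω, U q κ γ β (min (κ*(1+α-ω)) (min κ q)) ω ∂Λ

/-- Value of the quota-first policy Q. -/
noncomputable def UQ (q κ γ β : ℝ) (Λ : Measure ℝ) (Q : ℝ) : ℝ :=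
  ∫ ω, U q κ γ β (min (max Q (κ*(1-ω))) (min κ q)) ω ∂Λ

/-- Optimal priority value `V_P = sup_{α ≥ 0} U_P(α)`. -/
noncomputable def VP (q κ γ β : ℝ) (Λ : Measure ℝ) : ℝ :=
  sSup (UP q κ γ β Λ '' Set.Ici (0:ℝ))

/-- Optimal quota value `V_Q = sup_{Q ∈ [0,min{κ,q}]} U_Q(Q)`. -/
noncomputable def VQ (q κ γ β : ℝ) (Λ : Measure ℝ) : ℝ :=
  sSup (UQ q κ γ β Λ '' Set.Icc (0:ℝ) (min κ q))

noncomputable def curvature (κ γ β : ℝ) : ℝ := 1/κ + γ*β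

noncomputable def peak (κ γ β ω : ℝ) : ℝ := (1 + γ - ω) / curvature κ γ β

noncomputable def firstBestValue (q κ γ β : ℝ) (Λ : Measure ℝ) : ℝ :=
  ∫ ω, U q κ γ β (peak κ γ β ω) ω ∂Λ

/-- The priority whose uncapped admission `κ (1 + α - ω)` equals `peak` in the mean state. -/
noncomputable def priorityOpt (κ γ β : ℝ) (Λ : Measure ℝ) : ℝ :=
  peak κ γ β (Emean Λ) / κ - 1 + Emean Λ

section Payoff

variable {q κ γ β : ℝ}

theorem U_eq_sub_sq (hc : curvature κ γ β ≠ 0) (x ω : ℝ) :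
    U q κ γ β x ω
      = U q κ γ β (peak κ γ β ω) ω - curvature κ γ β / 2 * (x - peak κ γ β ω)^2 := by
  unfold U peak
  unfold curvature at *
  field_simp
  ring

theorem U_monotoneOn (hc : 0 < curvature κ γ β) (ω : ℝ) :
    MonotoneOn (U q κ γ β · ω) (Iic (peak κ γ β ω)) := by
  intro x hx y hy hxy
  show U q κ γ β x ω ≤ U q κ γ β y ω
  rw [U_eq_sub_sq hc.ne' x, U_eq_sub_sq hc.ne' y]
  have : (y - peak κ γ β ω)^2 ≤ (x - peak κ γ β ω)^2 := by
    nlinarith [mem_Iic.1 hx, mem_Iic.1 hy]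
  gcongr

theorem U_antitoneOn (hc : 0 < curvature κ γ β) (ω : ℝ) :
    AntitoneOn (U q κ γ β · ω) (Ici (peak κ γ β ω)) := by
  intro x hx y hy hxy
  show U q κ γ β y ω ≤ U q κ γ β x ω
  rw [U_eq_sub_sq hc.ne' x, U_eq_sub_sq hc.ne' y]
  have : (x - peak κ γ β ω)^2 ≤ (y - peak κ γ β ω)^2 := by
    nlinarith [mem_Ici.1 hx, mem_Ici.1 hy]
  gcongr

theorem peak_antitone (hc : 0 < curvature κ γ β) : Antitone (peak κ γ β) :=
  fun _ _ h => div_le_div_of_nonneg_right (by linarith) hc.le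

end Payoff

section Moments

variable {Λ : Measure ℝ} {a b : ℝ}

theorem integrable_of_ae_mem_Icc [IsFiniteMeasure Λ] (hΛ : ∀ᵐ ω ∂Λ, ω ∈ Icc a b)
    {f : ℝ → ℝ} (hf : Continuous f) : Integrable f Λ := by
  rw [← Measure.restrict_eq_self_of_ae_mem hΛ]
  exact hf.continuousOn.integrableOn_compact isCompact_Icc

theorem Emean_mem_Icc [IsProbabilityMeasure Λ] (hΛ : ∀ᵐ ω ∂Λ, ω ∈ Icc a b) :
    Emean Λ ∈ Icc a b :=
  (convex_Icc a b).integral_mem isClosed_Icc hΛ (integrable_of_ae_mem_Icc hΛ continuous_id)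

theorem integral_affine_sq [IsProbabilityMeasure Λ] (h1 : Integrable (fun ω => ω) Λ)
    (h2 : Integrable (fun ω => (ω - Emean Λ)^2) Λ) (a b : ℝ) :
    ∫ ω, (a + b * (ω - Emean Λ))^2 ∂Λ = a^2 + b^2 * Vvar Λ := by
  have hcentered : ∫ ω, (ω - Emean Λ) ∂Λ = 0 := by
    rw [integral_sub h1 (integrable_const _)]
    simp [Emean]
  have hexpand : ∀ ω, (a + b * (ω - Emean Λ))^2
      = (a^2 + 2*a*b * (ω - Emean Λ)) + b^2 * (ω - Emean Λ)^2 := fun ω => by ring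
  have h1' : Integrable (fun ω => ω - Emean Λ) Λ := h1.sub (integrable_const _)
  simp_rw [hexpand]
  rw [integral_add (f := fun ω => a^2 + 2*a*b * (ω - Emean Λ))
      ((integrable_const _).add (h1'.const_mul _)) (h2.const_mul _),
    integral_add (f := fun _ => a^2) (integrable_const _) (h1'.const_mul _), integral_const_mul,
    integral_const_mul, hcentered, integral_const, Vvar]
  simp

end Moments

theorem priority_at_priorityOpt {κ : ℝ} (γ β : ℝ) (Λ : Measure ℝ) (hκ : κ ≠ 0) (ω : ℝ) :
    κ * (1 + priorityOpt κ γ β Λ - ω) = peak κ γ β (Emean Λ) + κ * (Emean Λ - ω) := by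
  unfold priorityOpt
  field_simp
  ring

section Policies

variable {q κ γ β ωl ωh : ℝ} {Λ : Measure ℝ} [IsProbabilityMeasure Λ]

theorem integral_U_of_sub_peak_eq (hc : curvature κ γ β ≠ 0) (hΛ : ∀ᵐ ω ∂Λ, ω ∈ Icc ωl ωh)
    {g : ℝ → ℝ} {a b : ℝ}
    (hgap : ∀ ω, g ω - peak κ γ β ω = a + b * (ω - Emean Λ)) :
    ∫ ω, U q κ γ β (g ω) ω ∂Λ
      = firstBestValue q κ γ β Λ - curvature κ γ β / 2 * (a^2 + b^2 * Vvar Λ) := by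
  have hint {f : ℝ → ℝ} (hf : Continuous f) := integrable_of_ae_mem_Icc hΛ hf
  have hU : ∀ ω, U q κ γ β (g ω) ω = U q κ γ β (peak κ γ β ω) ω
      - curvature κ γ β / 2 * (a + b * (ω - Emean Λ))^2 := fun ω => by
    rw [U_eq_sub_sq hc, hgap]
  simp_rw [hU]
  rw [integral_sub (hint (by unfold U peak; fun_prop)) ((hint (by fun_prop)).const_mul _),
    integral_const_mul, integral_affine_sq (hint continuous_id) (hint (by fun_prop)),
    firstBestValue]

theorem integral_U_priority (hκ : κ ≠ 0) (hc : curvature κ γ β ≠ 0)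
    (hΛ : ∀ᵐ ω ∂Λ, ω ∈ Icc ωl ωh) (α : ℝ) :
    ∫ ω, U q κ γ β (κ * (1 + α - ω)) ω ∂Λ = firstBestValue q κ γ β Λ - curvature κ γ β / 2
      * ((κ * (α - priorityOpt κ γ β Λ))^2 + (1 / curvature κ γ β - κ)^2 * Vvar Λ) :=
  integral_U_of_sub_peak_eq hc hΛ fun ω => by
    have h := priority_at_priorityOpt γ β Λ hκ ω
    unfold peak at *
    field_simp at h ⊢
    linear_combination h

theorem integral_U_const (hc : curvature κ γ β ≠ 0) (hΛ : ∀ᵐ ω ∂Λ, ω ∈ Icc ωl ωh) (Q : ℝ) :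
    ∫ ω, U q κ γ β Q ω ∂Λ = firstBestValue q κ γ β Λ - curvature κ γ β / 2
      * ((Q - peak κ γ β (Emean Λ))^2 + (1 / curvature κ γ β)^2 * Vvar Λ) :=
  integral_U_of_sub_peak_eq hc hΛ fun ω => by
    unfold peak
    field_simp
    ring

/-- `cap / κ - 1 + ωl` is the priority at which the cap starts to bind in state `ωl`. -/
theorem U_priority_le {cap ω : ℝ} (hκ : 0 < κ) (hc : 0 < curvature κ γ β)
    (hreg : peak κ γ β ωl + κ * (ωh - ωl) ≤ cap) (hω : ω ∈ Icc ωl ωh) (α : ℝ) :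
    U q κ γ β (min (κ * (1 + α - ω)) cap) ω
      ≤ U q κ γ β (κ * (1 + min α (cap / κ - 1 + ωl) - ω)) ω := by
  have hbind : κ * (1 + (cap / κ - 1 + ωl) - ω) = cap - κ * (ω - ωl) := by
    field_simp
    ring
  have hspread : κ * (ω - ωl) ≤ κ * (ωh - ωl) := by gcongr; exact hω.2
  rcases le_total α (cap / κ - 1 + ωl) with h | h
  · rw [min_eq_left h, min_eq_left]
    calc κ * (1 + α - ω) ≤ κ * (1 + (cap / κ - 1 + ωl) - ω) := by gcongr
      _ ≤ cap := by rw [hbind]; nlinarith [hω.1]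
  · have hpeak : peak κ γ β ω ≤ cap - κ * (ω - ωl) := by
      linarith [peak_antitone hc hω.1]
    have hle : cap - κ * (ω - ωl) ≤ min (κ * (1 + α - ω)) cap :=
      le_min (by rw [← hbind]; gcongr) (by nlinarith [hω.1])
    rw [min_eq_right h, hbind]
    exact U_antitoneOn hc ω hpeak (hpeak.trans hle) hle

theorem UP_le (hκ : 0 < κ) (hc : 0 < curvature κ γ β) (hΛ : ∀ᵐ ω ∂Λ, ω ∈ Icc ωl ωh)
    (hreg : peak κ γ β ωl + κ * (ωh - ωl) ≤ min κ q) (α : ℝ) :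
    UP q κ γ β Λ α ≤ firstBestValue q κ γ β Λ
      - curvature κ γ β / 2 * ((1 / curvature κ γ β - κ)^2 * Vvar Λ) := by
  have hint {f : ℝ → ℝ} (hf : Continuous f) := integrable_of_ae_mem_Icc hΛ hf
  set α' := min α (min κ q / κ - 1 + ωl)
  calc UP q κ γ β Λ α ≤ ∫ ω, U q κ γ β (κ * (1 + α' - ω)) ω ∂Λ :=
        integral_mono_ae (hint (by unfold U; fun_prop)) (hint (by unfold U; fun_prop))
          (hΛ.mono fun ω hω => U_priority_le hκ hc hreg hω α)
    _ = firstBestValue q κ γ β Λ - curvature κ γ β / 2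
          * ((κ * (α' - priorityOpt κ γ β Λ))^2 + (1 / curvature κ γ β - κ)^2 * Vvar Λ) :=
        integral_U_priority hκ.ne' hc.ne' hΛ α'
    _ ≤ _ := by gcongr; exact le_add_of_nonneg_left (sq_nonneg _)

theorem UP_priorityOpt (hκ : 0 < κ) (hc : 0 < curvature κ γ β) (hΛ : ∀ᵐ ω ∂Λ, ω ∈ Icc ωl ωh)
    (hreg : peak κ γ β ωl + κ * (ωh - ωl) ≤ min κ q) :
    UP q κ γ β Λ (priorityOpt κ γ β Λ) = firstBestValue q κ γ β Λ
      - curvature κ γ β / 2 * ((1 / curvature κ γ β - κ)^2 * Vvar Λ) := by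
  obtain ⟨hml, hmh⟩ := Emean_mem_Icc hΛ
  have hunclipped : UP q κ γ β Λ (priorityOpt κ γ β Λ)
      = ∫ ω, U q κ γ β (κ * (1 + priorityOpt κ γ β Λ - ω)) ω ∂Λ := by
    refine integral_congr_ae (hΛ.mono fun ω hω => ?_)
    have hspread : κ * (Emean Λ - ω) ≤ κ * (ωh - ωl) := by gcongr; linarith [hω.1]
    have hle : κ * (1 + priorityOpt κ γ β Λ - ω) ≤ min κ q := by
      linarith [priority_at_priorityOpt γ β Λ hκ.ne' ω, peak_antitone hc hml]
    dsimp only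
    rw [min_eq_left hle]
  rw [hunclipped, integral_U_priority hκ.ne' hc.ne' hΛ]
  simp

theorem priorityOpt_nonneg (hκ : 0 < κ) (hc : 0 < curvature κ γ β)
    (hΛ : ∀ᵐ ω ∂Λ, ω ∈ Icc ωl ωh) (hreg : κ * (1 - ωl) ≤ peak κ γ β ωh) :
    0 ≤ priorityOpt κ γ β Λ := by
  obtain ⟨hml, hmh⟩ := Emean_mem_Icc hΛ
  have hfloor : κ * (1 - Emean Λ) ≤ peak κ γ β (Emean Λ) := by
    nlinarith [peak_antitone hc hmh]
  have : 1 - Emean Λ ≤ peak κ γ β (Emean Λ) / κ := by rw [le_div_iff₀ hκ]; linarith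
  unfold priorityOpt
  linarith

theorem U_quota_le {cap Q ω : ℝ} (hκ : 0 ≤ κ) (hc : 0 < curvature κ γ β)
    (hreg : κ * (1 - ωl) ≤ peak κ γ β ωh) (hω : ω ∈ Icc ωl ωh) (hQ : Q ≤ cap) :
    U q κ γ β (min (max Q (κ * (1 - ω))) cap) ω ≤ U q κ γ β (max Q (κ * (1 - ωl))) ω := by
  have hfloor : κ * (1 - ω) ≤ κ * (1 - ωl) := by gcongr; exact hω.1
  rcases le_total (κ * (1 - ωl)) Q with h | h
  · rw [max_eq_left h, max_eq_left (hfloor.trans h), min_eq_left hQ]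
  · have hpeak : κ * (1 - ωl) ≤ peak κ γ β ω := hreg.trans (peak_antitone hc hω.2)
    have hle : min (max Q (κ * (1 - ω))) cap ≤ κ * (1 - ωl) :=
      (min_le_left _ _).trans (max_le h hfloor)
    rw [max_eq_right h]
    exact U_monotoneOn hc ω (hle.trans hpeak) hpeak hle

theorem UQ_le (hκ : 0 ≤ κ) (hc : 0 < curvature κ γ β) (hΛ : ∀ᵐ ω ∂Λ, ω ∈ Icc ωl ωh)
    (hreg : κ * (1 - ωl) ≤ peak κ γ β ωh) {Q : ℝ} (hQ : Q ≤ min κ q) :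
    UQ q κ γ β Λ Q ≤ firstBestValue q κ γ β Λ
      - curvature κ γ β / 2 * ((1 / curvature κ γ β)^2 * Vvar Λ) := by
  have hint {f : ℝ → ℝ} (hf : Continuous f) := integrable_of_ae_mem_Icc hΛ hf
  calc UQ q κ γ β Λ Q ≤ ∫ ω, U q κ γ β (max Q (κ * (1 - ωl))) ω ∂Λ :=
        integral_mono_ae (hint (by unfold U; fun_prop)) (hint (by unfold U; fun_prop))
          (hΛ.mono fun ω hω => U_quota_le hκ hc hreg hω hQ)
    _ = firstBestValue q κ γ β Λ - curvature κ γ β / 2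
          * ((max Q (κ * (1 - ωl)) - peak κ γ β (Emean Λ))^2
            + (1 / curvature κ γ β)^2 * Vvar Λ) := integral_U_const hc.ne' hΛ _
    _ ≤ _ := by gcongr; exact le_add_of_nonneg_left (sq_nonneg _)

theorem peak_Emean_mem_Icc (hκ : 0 ≤ κ) (hc : 0 < curvature κ γ β) (hγ : 0 ≤ γ) (hωh : ωh ≤ 1)
    (hΛ : ∀ᵐ ω ∂Λ, ω ∈ Icc ωl ωh) (hreg : peak κ γ β ωl + κ * (ωh - ωl) ≤ min κ q) :
    peak κ γ β (Emean Λ) ∈ Icc 0 (min κ q) := by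
  obtain ⟨hml, hmh⟩ := Emean_mem_Icc hΛ
  refine ⟨div_nonneg (by linarith) hc.le, ?_⟩
  nlinarith [peak_antitone hc hml]

theorem UQ_peak_Emean (hκ : 0 ≤ κ) (hc : 0 < curvature κ γ β) (hγ : 0 ≤ γ) (hωh : ωh ≤ 1)
    (hΛ : ∀ᵐ ω ∂Λ, ω ∈ Icc ωl ωh) (hreg1 : peak κ γ β ωl + κ * (ωh - ωl) ≤ min κ q)
    (hreg2 : κ * (1 - ωl) ≤ peak κ γ β ωh) :
    UQ q κ γ β Λ (peak κ γ β (Emean Λ)) = firstBestValue q κ γ β Λ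
      - curvature κ γ β / 2 * ((1 / curvature κ γ β)^2 * Vvar Λ) := by
  have hcap := (peak_Emean_mem_Icc hκ hc hγ hωh hΛ hreg1).2
  have hfloor : κ * (1 - ωl) ≤ peak κ γ β (Emean Λ) :=
    hreg2.trans (peak_antitone hc (Emean_mem_Icc hΛ).2)
  have hunclipped : UQ q κ γ β Λ (peak κ γ β (Emean Λ))
      = ∫ ω, U q κ γ β (peak κ γ β (Emean Λ)) ω ∂Λ := by
    refine integral_congr_ae (hΛ.mono fun ω hω => ?_)
    have hfloor' : κ * (1 - ω) ≤ κ * (1 - ωl) := by gcongr; exact hω.1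
    dsimp only
    rw [max_eq_left (hfloor'.trans hfloor), min_eq_left hcap]
  rw [hunclipped, integral_U_const hc.ne' hΛ]
  simp

theorem VP_eq (hκ : 0 < κ) (hc : 0 < curvature κ γ β) (hΛ : ∀ᵐ ω ∂Λ, ω ∈ Icc ωl ωh)
    (hreg1 : peak κ γ β ωl + κ * (ωh - ωl) ≤ min κ q)
    (hreg2 : κ * (1 - ωl) ≤ peak κ γ β ωh) :
    VP q κ γ β Λ = firstBestValue q κ γ β Λ
      - curvature κ γ β / 2 * ((1 / curvature κ γ β - κ)^2 * Vvar Λ) := by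
  rw [VP, ← UP_priorityOpt hκ hc hΛ hreg1]
  exact IsGreatest.csSup_eq ⟨mem_image_of_mem _ (priorityOpt_nonneg hκ hc hΛ hreg2),
    forall_mem_image.2 fun α _ => (UP_le hκ hc hΛ hreg1 α).trans_eq
      (UP_priorityOpt hκ hc hΛ hreg1).symm⟩

theorem VQ_eq (hκ : 0 ≤ κ) (hc : 0 < curvature κ γ β) (hγ : 0 ≤ γ) (hωh : ωh ≤ 1)
    (hΛ : ∀ᵐ ω ∂Λ, ω ∈ Icc ωl ωh) (hreg1 : peak κ γ β ωl + κ * (ωh - ωl) ≤ min κ q)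
    (hreg2 : κ * (1 - ωl) ≤ peak κ γ β ωh) :
    VQ q κ γ β Λ = firstBestValue q κ γ β Λ
      - curvature κ γ β / 2 * ((1 / curvature κ γ β)^2 * Vvar Λ) := by
  rw [VQ, ← UQ_peak_Emean hκ hc hγ hωh hΛ hreg1 hreg2]
  exact IsGreatest.csSup_eq ⟨mem_image_of_mem _ (peak_Emean_mem_Icc hκ hc hγ hωh hΛ hreg1),
    forall_mem_image.2 fun Q hQ => (UQ_le hκ hc hΛ hreg2 hQ.2).trans_eq
      (UQ_peak_Emean hκ hc hγ hωh hΛ hreg1 hreg2).symm⟩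

end Policies

theorem stmt_5_general (q κ γ β ωl ωh : ℝ)
    (hκ : 0 < κ) (hγ : 0 ≤ γ) (hβ : 0 ≤ β)
    (hωh : ωh ≤ 1)
    (hreg1 : (1 + γ - ωl)/(1/κ + γ*β) + κ*(ωh - ωl) < min κ q)
    (hreg2 : κ*(1 - ωl) < (1 + γ - ωh)/(1/κ + γ*β))
    (Λ : Measure ℝ) [IsProbabilityMeasure Λ] (hsupp : Λ (Set.Icc ωl ωh)ᶜ = 0) :
    VP q κ γ β Λ - VQ q κ γ β Λ = (κ/2) * (1 - κ*γ*β) * Vvar Λ := by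
  have hc : 0 < curvature κ γ β := by unfold curvature; positivity
  have hΛ : ∀ᵐ ω ∂Λ, ω ∈ Icc ωl ωh := mem_ae_iff.2 hsupp
  rw [VP_eq hκ hc hΛ hreg1.le hreg2.le, VQ_eq hκ.le hc hγ hωh hΛ hreg1.le hreg2.le]
  unfold curvature
  field_simp
  ring

/-- The comparative advantage of priorities over quotas:
`Δ = V_P − V_Q = (κ/2)(1 − κγβ)·Var[ω]`. -/
theorem stmt_5 (q κ γ β ωl ωh : ℝ)
    (hq0 : 0 < q) (hq1 : q ≤ 1) (hκ : 0 < κ) (hγ : 0 ≤ γ) (hβ : 0 ≤ β)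
    (hωl : 0 ≤ ωl) (hωlt : ωl < ωh) (hωh : ωh ≤ 1)
    (hreg1 : (1 + γ - ωl)/(1/κ + γ*β) + κ*(ωh - ωl) < min κ q)
    (hreg2 : κ*(1 - ωl) < (1 + γ - ωh)/(1/κ + γ*β))
    (Λ : Measure ℝ) [IsProbabilityMeasure Λ] (hsupp : Λ (Set.Icc ωl ωh)ᶜ = 0) :
    VP q κ γ β Λ - VQ q κ γ β Λ = (κ/2) * (1 - κ*γ*β) * Vvar Λ :=
  stmt_5_general q κ γ β ωl ωh hκ hγ hβ hωh hreg1 hreg2 Λ hsupp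
end

section
/- If S ⊆ Θ with |S| = q is not implemented by the optimal APM A*, then there exists S' ⊆ Θ with |S'| = q and W(S') > W(S); consequently every W-maximizing subset of cardinality q is implemented by A*. -/
open Finset

/-- Number of agents from group `g` in `S`. -/
def xg {Θ M : Type*} [DecidableEq M] (m : Θ → M) (S : Finset Θ) (g : M) : ℕ :=
  (S.filter (fun θ => m θ = g)).card

/-- The authority's payoff from admitting the set `S`:
`W(S) = Σ_{θ∈S} h(s(θ)) + Σ_{g} u_g(x_g(S))`. -/
noncomputable def W {Θ M : Type*} [Fintype M] [DecidableEq M]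
    (h : ℝ → ℝ) (s : Θ → ℝ) (u : M → ℕ → ℝ) (m : Θ → M) (S : Finset Θ) : ℝ :=
  (∑ θ ∈ S, h (s θ)) + ∑ g : M, u g (xg m S g)

/-- `S` is implemented by the optimal APM `A*`. -/
def ImplementedByAPM {Θ M : Type*} [DecidableEq M]
    (h : ℝ → ℝ) (s : Θ → ℝ) (u : M → ℕ → ℝ) (m : Θ → M) (S : Finset Θ) : Prop :=
  (∀ θ ∈ S, ∀ θ' : Θ, θ' ∉ S → m θ' = m θ → s θ' < s θ) ∧
  (∀ θ ∈ S, ∀ θ' : Θ, θ' ∉ S → m θ' ≠ m θ →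
    h (s θ') + (u (m θ') (xg m S (m θ') + 1) - u (m θ') (xg m S (m θ'))) ≤
    h (s θ) + (u (m θ) (xg m S (m θ)) - u (m θ) (xg m S (m θ) - 1)))

/-! Exchanging an admitted agent `θ` for a rejected agent `θ'` changes `W` by the difference
of their marginal gains with respect to `S.erase θ`. If they belong to the same group this
difference is `h (s θ') - h (s θ)`, positive when (i) fails; otherwise removing `θ` lowers only
its own group's count by one, and the difference is exactly the failure of (ii). So a set that
is not implemented is improved by a single exchange, and a maximiser must be implemented. -/

noncomputable def marginalGain {Θ M : Type*} [DecidableEq M]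
    (h : ℝ → ℝ) (s : Θ → ℝ) (u : M → ℕ → ℝ) (m : Θ → M) (S : Finset Θ) (θ : Θ) : ℝ :=
  h (s θ) + (u (m θ) (xg m S (m θ) + 1) - u (m θ) (xg m S (m θ)))

section

variable {Θ M : Type*} [DecidableEq Θ] [DecidableEq M]
  (h : ℝ → ℝ) (s : Θ → ℝ) (u : M → ℕ → ℝ) (m : Θ → M)

lemma xg_insert {S : Finset Θ} {θ : Θ} (hθ : θ ∉ S) (g : M) :
    xg m (insert θ S) g = xg m S g + if m θ = g then 1 else 0 := by
  unfold xg
  rw [filter_insert]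
  split_ifs with hg
  · exact card_insert_of_notMem fun hmem => hθ (mem_filter.mp hmem).1
  · rfl

lemma xg_erase_add {S : Finset Θ} {θ : Θ} (hθ : θ ∈ S) (g : M) :
    xg m (S.erase θ) g + (if m θ = g then 1 else 0) = xg m S g := by
  rw [← xg_insert m (notMem_erase θ S), insert_erase hθ]

lemma W_insert [Fintype M] {S : Finset Θ} {θ : Θ} (hθ : θ ∉ S) :
    W h s u m (insert θ S) = W h s u m S + marginalGain h s u m S θ := by
  have hu : ∀ g, u g (xg m (insert θ S) g) = u g (xg m S g) +
      if m θ = g then u g (xg m S g + 1) - u g (xg m S g) else 0 := by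
    intro g
    rw [xg_insert m hθ]
    split_ifs <;> simp
  simp only [W, marginalGain, sum_insert hθ, hu, sum_add_distrib, sum_ite_eq, mem_univ,
    if_true]
  ring

lemma W_lt_W_exchange [Fintype M] {S : Finset Θ} {θ θ' : Θ} (hθ : θ ∈ S) (hθ' : θ' ∉ S)
    (hgain : marginalGain h s u m (S.erase θ) θ < marginalGain h s u m (S.erase θ) θ') :
    W h s u m S < W h s u m (insert θ' (S.erase θ)) := by
  have hS : W h s u m S = W h s u m (S.erase θ) + marginalGain h s u m (S.erase θ) θ := by
    rw [← W_insert h s u m (notMem_erase θ S), insert_erase hθ]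
  rw [hS, W_insert h s u m fun hmem => hθ' (mem_of_mem_erase hmem)]
  linarith

lemma card_insert_erase {S : Finset Θ} {θ θ' : Θ} (hθ : θ ∈ S) (hθ' : θ' ∉ S) :
    #(insert θ' (S.erase θ)) = #S := by
  rw [card_insert_of_notMem fun hmem => hθ' (mem_of_mem_erase hmem), card_erase_add_one hθ]

lemma marginalGain_erase_lt_of_same_group {S : Finset Θ} {θ θ' : Θ}
    (hm : m θ' = m θ) (hlt : h (s θ) < h (s θ')) :
    marginalGain h s u m (S.erase θ) θ < marginalGain h s u m (S.erase θ) θ' := by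
  simp only [marginalGain, hm]
  linarith

lemma marginalGain_erase_lt_of_ne_group {S : Finset Θ} {θ θ' : Θ} (hθ : θ ∈ S)
    (hm : m θ' ≠ m θ)
    (hlt : h (s θ) + (u (m θ) (xg m S (m θ)) - u (m θ) (xg m S (m θ) - 1)) <
      h (s θ') + (u (m θ') (xg m S (m θ') + 1) - u (m θ') (xg m S (m θ')))) :
    marginalGain h s u m (S.erase θ) θ < marginalGain h s u m (S.erase θ) θ' := by
  have hx : xg m (S.erase θ) (m θ) + 1 = xg m S (m θ) := by
    simpa using xg_erase_add m hθ (m θ)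
  have hx' : xg m (S.erase θ) (m θ') = xg m S (m θ') := by
    simpa [Ne.symm hm] using xg_erase_add m hθ (m θ')
  have hx₁ : xg m (S.erase θ) (m θ) = xg m S (m θ) - 1 := by omega
  rwa [marginalGain, marginalGain, hx', hx₁, Nat.sub_add_cancel (by omega)]

lemma exists_card_eq_W_lt_of_not_implementedByAPM [Fintype M] (hs : Function.Injective s)
    (hh : StrictMonoOn h (Set.Icc (0 : ℝ) 1)) (hs01 : ∀ θ, s θ ∈ Set.Icc (0 : ℝ) 1)
    {S : Finset Θ} (hS : ¬ ImplementedByAPM h s u m S) :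
    ∃ S' : Finset Θ, #S' = #S ∧ W h s u m S < W h s u m S' := by
  suffices ∃ θ ∈ S, ∃ θ' ∉ S,
      marginalGain h s u m (S.erase θ) θ < marginalGain h s u m (S.erase θ) θ' by
    obtain ⟨θ, hθ, θ', hθ', hgain⟩ := this
    exact ⟨_, card_insert_erase hθ hθ', W_lt_W_exchange h s u m hθ hθ' hgain⟩
  simp only [ImplementedByAPM, not_and_or, not_forall, not_lt, not_le] at hS
  rcases hS with ⟨θ, hθ, θ', hθ', hm, hle⟩ | ⟨θ, hθ, θ', hθ', hm, hlt⟩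
  · have hne : s θ ≠ s θ' := hs.ne fun heq => hθ' (heq ▸ hθ)
    exact ⟨θ, hθ, θ', hθ', marginalGain_erase_lt_of_same_group h s u m hm
      (hh (hs01 θ) (hs01 θ') (lt_of_le_of_ne hle hne))⟩
  · exact ⟨θ, hθ, θ', hθ', marginalGain_erase_lt_of_ne_group h s u m hθ hm hlt⟩

end

theorem stmt_12_general {Θ M : Type*} [DecidableEq Θ] [Fintype M] [DecidableEq M]
    (s : Θ → ℝ) (hs : Function.Injective s) (hs01 : ∀ θ, s θ ∈ Set.Icc (0:ℝ) 1)
    (m : Θ → M) (q : ℕ)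
    (h : ℝ → ℝ) (hh : StrictMonoOn h (Set.Icc (0:ℝ) 1))
    (u : M → ℕ → ℝ) :
    (∀ S : Finset Θ, S.card = q → ¬ ImplementedByAPM h s u m S →
      ∃ S' : Finset Θ, S'.card = q ∧ W h s u m S < W h s u m S') ∧
    (∀ S : Finset Θ, S.card = q →
      (∀ S' : Finset Θ, S'.card = q → W h s u m S' ≤ W h s u m S) →
      ImplementedByAPM h s u m S) := by
  have improve : ∀ S : Finset Θ, S.card = q → ¬ ImplementedByAPM h s u m S →
      ∃ S' : Finset Θ, S'.card = q ∧ W h s u m S < W h s u m S' := by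
    rintro S rfl hS
    exact exists_card_eq_W_lt_of_not_implementedByAPM h s u m hs hh hs01 hS
  refine ⟨improve, fun S hcard hmax => by_contra fun hS => ?_⟩
  obtain ⟨S', hcard', hlt⟩ := improve S hcard hS
  exact (hmax S' hcard').not_gt hlt

/-- If `S` with `|S| = q` is not implemented by the optimal APM `A*`, then some
`S'` with `|S'| = q` has `W(S') > W(S)`; consequently every `W`-maximizing
subset of cardinality `q` is implemented by `A*`. -/
theorem stmt_12 {Θ M : Type*} [Fintype Θ] [DecidableEq Θ] [Fintype M] [DecidableEq M]
    (s : Θ → ℝ) (hs : Function.Injective s) (hs01 : ∀ θ, s θ ∈ Set.Icc (0:ℝ) 1)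
    (m : Θ → M) (q : ℕ) (hq : q ≤ Fintype.card Θ)
    (h : ℝ → ℝ) (hh : StrictMonoOn h (Set.Icc (0:ℝ) 1))
    (u : M → ℕ → ℝ)
    (hu : ∀ g x, u g (x+2) - u g (x+1) ≤ u g (x+1) - u g x) :
    (∀ S : Finset Θ, S.card = q → ¬ ImplementedByAPM h s u m S →
      ∃ S' : Finset Θ, S'.card = q ∧ W h s u m S < W h s u m S') ∧
    (∀ S : Finset Θ, S.card = q →
      (∀ S' : Finset Θ, S'.card = q → W h s u m S' ≤ W h s u m S) →
      ImplementedByAPM h s u m S) :=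
  stmt_12_general s hs hs01 m q h hh u
end
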